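/- Let U, V ∈ ℝ_max^{m×n}, b, d ∈ ℝ_max^m, p ∈ ℝ_max^n, q ∈ (ℝ ∪ {+∞})^n and λ ∈ ℝ. Define the (m+n+1) × (n+1) matrices A and B(λ) over ℝ_max in block form: A has rows 1..m equal to [U, b], rows m+1..m+n equal to [−∞ (an n×n all-−∞ block), p] (row m+i having entry p_i in the last column), and last row [q^-, −∞] (entry −q_j in column j when q_j ∈ ℝ, −∞ otherwise); B(λ) has rows 1..m equal to [V, d], rows m+1..m+n equal to [λ ⊗ I, −∞] (entry λ in position (m+i, i), −∞ elsewhere), and last row with entry λ in the last column and −∞ elsewhere. Then the following are equivalent: (i) there exists x ∈ ℝ^n with p_i ≤ λ + x_i for all i, x_i ≤ λ + q_i for all i with q_i ∈ ℝ, and max( max_j(u_{ij}+x_j), b_i ) ≤ max( max_j(v_{ij}+x_j), d_i ) for all i; (ii) there exists z ∈ ℝ^{n+1} with A ⊗ z ≤ B(λ) ⊗ z. -/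

import Mathlib

/-!
The two-sided system `A ⊗ z ≤ B(λ) ⊗ z` is homogeneous: adding a real constant to every entry
of `z` adds it to both sides. So we may assume `z = (x, 0)`. For such `z` the three row blocks
of the system are literally the three families of constraints on `x`: the rows of `[U, b]` give
the two-sided inequalities, the rows of `[−∞, p]` give `p_i ≤ λ + x_i`, and the last row gives
`−q_j + x_j ≤ λ`, i.e. `x_j ≤ λ + q_j`, a condition that is vacuous when `q_j = +∞`.
-/

namespace EReal

noncomputable def addCoeOrderIso (c : ℝ) : EReal ≃o EReal where
  toFun a := a + c
  invFun a := a - c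
  left_inv _ := add_sub_cancel_right
  right_inv _ := sub_add_cancel
  map_rel_iff' := (addLECancellable_coe c).add_le_add_iff_right

theorem iSup_add_coe {ι : Sort*} (f : ι → EReal) (c : ℝ) :
    (⨆ i, f i) + c = ⨆ i, f i + c :=
  (addCoeOrderIso c).map_iSup f

theorem neg_add_coe_le_coe_iff (a : EReal) (x y : ℝ) : -a + x ≤ y ↔ (x : EReal) ≤ y + a := by
  rw [add_comm, ← sub_eq_add_neg]
  exact sub_le_iff_le_add (.inr (coe_ne_top y)) (.inr (coe_ne_bot y))

theorem iSup_ite_add {κ : Type*} [DecidableEq κ] (k : κ) (c : EReal) (g : κ → EReal) :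
    (⨆ j, (if k = j then c else ⊥) + g j) = c + g k := by
  refine le_antisymm (iSup_le fun j => ?_) (le_iSup_of_le k (by simp))
  by_cases h : k = j
  · subst h; simp
  · simp [h]

theorem iSup_add_coe_add_const {κ : Type*} (f : κ → EReal) (z : κ → ℝ) (t : ℝ) :
    (⨆ j, f j + ((z j + t : ℝ) : EReal)) = (⨆ j, f j + z j) + t := by
  simp only [iSup_add_coe, coe_add, add_assoc]

end EReal

open EReal

theorem exists_maxPlus_solution_iff_exists_elim_zero {ι κ : Type*}
    (A B : ι → κ ⊕ Unit → EReal) :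
    (∃ z : κ ⊕ Unit → ℝ, ∀ i, (⨆ j, A i j + (z j : EReal)) ≤ ⨆ j, B i j + (z j : EReal)) ↔
    ∃ x : κ → ℝ, ∀ i, (⨆ j, A i j + ((Sum.elim x 0 j : ℝ) : EReal)) ≤
      ⨆ j, B i j + ((Sum.elim x 0 j : ℝ) : EReal) := by
  refine ⟨fun ⟨z, hz⟩ => ⟨fun k => z (.inl k) - z (.inr ()), fun i => ?_⟩,
    fun ⟨x, hx⟩ => ⟨_, hx⟩⟩
  have hshift : Sum.elim (fun k => z (.inl k) - z (.inr ())) 0 = fun j => z j + -z (.inr ()) := by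
    ext (k | u) <;> simp [sub_eq_add_neg]
  rw [hshift, iSup_add_coe_add_const, iSup_add_coe_add_const]
  exact add_le_add_left (hz i) _

theorem iSup_sum_elim_zero {κ : Type*} (f : κ ⊕ Unit → EReal) (x : κ → ℝ) :
    (⨆ j, f j + ((Sum.elim x 0 j : ℝ) : EReal)) = (⨆ k, f (.inl k) + x k) ⊔ f (.inr ()) := by
  simp [iSup_sum]

theorem stmt13 (m n : ℕ) (U V : Fin m → Fin n → EReal) (b d : Fin m → EReal)
    (p q : Fin n → EReal) (lam : ℝ)
    (A B : (Fin m ⊕ Fin n ⊕ Unit) → (Fin n ⊕ Unit) → EReal)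
    (hA : A = fun i j =>
      match i, j with
      | Sum.inl i, Sum.inl j => U i j
      | Sum.inl i, Sum.inr _ => b i
      | Sum.inr (Sum.inl _), Sum.inl _ => ⊥
      | Sum.inr (Sum.inl i), Sum.inr _ => p i
      | Sum.inr (Sum.inr _), Sum.inl j => -(q j)
      | Sum.inr (Sum.inr _), Sum.inr _ => ⊥)
    (hB : B = fun i j =>
      match i, j with
      | Sum.inl i, Sum.inl j => V i j
      | Sum.inl i, Sum.inr _ => d i
      | Sum.inr (Sum.inl i), Sum.inl j => if i = j then (lam : EReal) else ⊥
      | Sum.inr (Sum.inl _), Sum.inr _ => ⊥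
      | Sum.inr (Sum.inr _), Sum.inl _ => ⊥
      | Sum.inr (Sum.inr _), Sum.inr _ => (lam : EReal)) :
    (∃ x : Fin n → ℝ,
        (∀ i, p i ≤ (lam : EReal) + (x i : EReal)) ∧
        (∀ i, q i ≠ ⊤ → (x i : EReal) ≤ (lam : EReal) + q i) ∧
        (∀ i, ((⨆ j, U i j + (x j : EReal)) ⊔ b i) ≤
              ((⨆ j, V i j + (x j : EReal)) ⊔ d i))) ↔
    (∃ z : (Fin n ⊕ Unit) → ℝ,
        ∀ i, (⨆ j, A i j + (z j : EReal)) ≤ ⨆ j, B i j + (z j : EReal)) := by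
  subst hA hB
  rw [exists_maxPlus_solution_iff_exists_elim_zero]
  refine exists_congr fun x => ?_
  have hq_row : (∀ i, q i ≠ ⊤ → (x i : EReal) ≤ lam + q i) ↔ ∀ i, -q i + x i ≤ lam := by
    refine forall_congr' fun i => ?_
    rw [neg_add_coe_le_coe_iff]
    by_cases hi : q i = ⊤ <;> simp [hi]
  simp only [Sum.forall, iSup_sum_elim_zero, iSup_ite_add, hq_row, bot_add, iSup_bot, sup_bot_eq,
    bot_sup_eq, iSup_le_iff, forall_const]
  exact and_rotate.symm
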